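/- (Suboptimality-robust regret bound) Let V be a real Hilbert space, λ > 0, B > 0, and consider T rounds of the CoRectron algorithm: A_0 = λI, ζ_0 = 0, and for each t = 1,…,T, ŵ_t = -A_{t-1}^{-1}ζ_{t-1}; the learner is given a nonempty set X_t ⊆ V, picks x̂_t ∈ X_t satisfying ⟨ŵ_t, x̂_t⟩ ≥ ⟨ŵ_t, x⟩ for all x ∈ X_t, observes x_t ∈ X_t (not necessarily optimal for u), sets g_t = x̂_t - x_t, and updates A_t = A_{t-1} + g_t ⊗ g_t, ζ_t = ζ_{t-1} + g_t. Let u ∈ V and assume ⟨u, x - x'⟩ ≤ B for all x, x' ∈ X_t and every t. Let δ_1,…,δ_T ≥ 0 be real numbers with δ_t ≥ ⟨u, x̂_t - x_t⟩ for every t (e.g., δ_t = max_{x∈X_t}⟨u,x⟩ - ⟨u,x_t⟩), and set Δ_T = Σ_{t=1}^T δ_t and H_T = log det(I_T + λ^{-1} K_T). Then the regret R_T(u) = Σ_{t=1}^T ⟨u, x_t - x̂_t⟩ satisfies R_T(u) ≤ B·H_T + ‖u‖·√(λ·H_T) + √(2B·Δ_T·H_T). -/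

import Mathlib

open scoped RealInnerProductSpace

/-- The rank-one operator `a ⊗ a : v ↦ ⟪a, v⟫ • a` on a real inner product space. -/
noncomputable def rankOne {V : Type*} [NormedAddCommGroup V] [InnerProductSpace ℝ V]
    (a : V) : V →L[ℝ] V :=
  (innerSL ℝ a).smulRight a

/-!
Write `P_n = A_n⁻¹` and `ζ_n = g_1 + ⋯ + g_n`. By the Sherman–Morrison formula, and because the
greedy choice of `x̂_{n+1}` against `ŵ_{n+1} = -P_n ζ_n` means `⟪ζ_n, P_n g_{n+1}⟫ ≤ 0`, the
potential `⟪ζ_n, P_n ζ_n⟫` grows by at most `log (1 + ⟪g_{n+1}, P_n g_{n+1}⟫)` per round. A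
Schur-complement induction identifies the product of the factors `1 + ⟪g_{n+1}, P_n g_{n+1}⟫` with
`det (I_T + λ⁻¹ K_T)`, so the potential at time `T` is at most `H_T`.

The regret is `R = -⟪u, ζ_T⟫`. Cauchy–Schwarz in the geometry of `A_T` gives
`R² ≤ ⟪u, A_T u⟫ H_T`, and `⟪u, A_T u⟫ = λ‖u‖² + Σ_t ⟪u, g_t⟫² ≤ λ‖u‖² + B (2 Δ_T + R)` since
`⟪u, g_t⟫ ∈ [-B, min(B, δ_t)]`. Solving the resulting quadratic inequality for `R` gives the bound.
-/

open Finset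
open scoped Ring Matrix

lemma two_mul_add_sub_sq_div_le_log {a s : ℝ} (ha : a ≤ 0) (hs : 0 ≤ s) :
    2 * a + s - (a + s) ^ 2 / (1 + s) ≤ Real.log (1 + s) := by
  have h1s : 0 < 1 + s := by linarith
  have hsplit : 2 * a + s - (a + s) ^ 2 / (1 + s) = 1 - (1 + s)⁻¹ - a * (a - 2) / (1 + s) := by
    field_simp
    ring
  have hgap : 0 ≤ a * (a - 2) / (1 + s) :=
    div_nonneg (mul_nonneg_of_nonpos_of_nonpos ha (by linarith)) h1s.le
  linarith [Real.one_sub_inv_le_log_of_pos h1s]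

lemma sq_le_mul_two_mul_sub {q d B : ℝ} (hq : |q| ≤ B) (hqd : q ≤ d) (hd : 0 ≤ d) :
    q ^ 2 ≤ B * (2 * d - q) := by
  obtain ⟨h₁, h₂⟩ := abs_le.1 hq
  rcases le_total 0 q with h | h <;> nlinarith

lemma le_add_add_of_sq_le {R b p q : ℝ} (hb : 0 ≤ b) (hp : 0 ≤ p) (hq : 0 ≤ q)
    (h : R ^ 2 ≤ b * R + p ^ 2 + q ^ 2) : R ≤ b + p + q := by
  nlinarith [mul_nonneg hp hq]

lemma eq_add_sum_range_of_succ_eq_add {M : Type*} [AddCommGroup M] {s f : ℕ → M} {N : ℕ}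
    (h : ∀ n < N, s (n + 1) = s n + f n) {n : ℕ} (hn : n ≤ N) :
    s n = s 0 + ∑ i ∈ range n, f i := by
  rw [Finset.eq_sum_range_sub s n]
  congr 1
  exact sum_congr rfl fun i hi => by rw [h i ((mem_range.1 hi).trans_le hn), add_sub_cancel_left]

theorem Matrix.det_succ_eq_det_mul_sub_dotProduct {α : Type*} [CommRing α] {n : ℕ}
    (M : Matrix (Fin (n + 1)) (Fin (n + 1)) α)
    (h : IsUnit (M.submatrix Fin.castSucc Fin.castSucc).det) :
    M.det = (M.submatrix Fin.castSucc Fin.castSucc).det *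
      (M (Fin.last n) (Fin.last n) - (fun j => M (Fin.last n) j.castSucc) ⬝ᵥ
        (M.submatrix Fin.castSucc Fin.castSucc)⁻¹ *ᵥ fun i => M i.castSucc (Fin.last n)) := by
  set M₀ := M.submatrix Fin.castSucc Fin.castSucc
  let := M₀.invertibleOfIsUnitDet h
  have hblocks : M.submatrix finSumFinEquiv finSumFinEquiv =
      fromBlocks M₀ (replicateCol (Fin 1) fun i => M i.castSucc (Fin.last n))
        (replicateRow (Fin 1) fun j => M (Fin.last n) j.castSucc)
        (of fun _ _ => M (Fin.last n) (Fin.last n)) := by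
    ext (i | i) (j | j) <;> simp [M₀, Fin.fin_one_eq_zero] <;> rfl
  rw [← det_submatrix_equiv_self finSumFinEquiv, hblocks, det_fromBlocks₁₁,
    det_unique (n := Fin 1), invOf_eq_nonsing_inv]
  simp only [Fin.default_eq_zero, sub_apply, of_apply, mul_apply, replicateRow_apply,
    replicateCol_apply, sum_mul, mul_assoc, dotProduct, mulVec, mul_sum]
  rw [Finset.sum_comm]

section

variable {V : Type*} [NormedAddCommGroup V] [InnerProductSpace ℝ V]

lemma rankOne_apply (a v : V) : rankOne a v = ⟪a, v⟫ • a := rfl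

lemma isPositive_rankOne (a : V) : (rankOne a).IsPositive :=
  InnerProductSpace.isPositive_rankOne_self a

noncomputable def shermanMorrison (P : V →L[ℝ] V) (g : V) : V →L[ℝ] V :=
  P - (1 + ⟪g, P g⟫)⁻¹ • rankOne (P g)

namespace ContinuousLinearMap

theorem IsPositive.inner_apply_sq_le {A : V →L[ℝ] V} (hA : A.IsPositive) (u w : V) :
    ⟪u, A w⟫ ^ 2 ≤ ⟪u, A u⟫ * ⟪w, A w⟫ :=
  LinearMap.BilinForm.apply_sq_le_of_symm ((innerₗ V).compl₂ (A : V →ₗ[ℝ] V))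
    hA.inner_nonneg_right
    ⟨fun v w => by simpa [real_inner_comm] using hA.isSymmetric w v⟩ u w

theorem IsPositive.ringInverse {A : V →L[ℝ] V} (hA : A.IsPositive) : A⁻¹ʳ.IsPositive := by
  by_cases hAu : IsUnit A
  · have hAP (v : V) : A (A⁻¹ʳ v) = v := DFunLike.congr_fun (Ring.mul_inverse_cancel A hAu) v
    refine (isPositive_iff _).2 ⟨fun v w => ?_, fun v => ?_⟩
    · conv_lhs => rw [← hAP w]
      conv_rhs => rw [← hAP v]
      exact (hA.isSymmetric _ _).symm
    · simpa only [hAP] using hA.inner_nonneg_right (A⁻¹ʳ v)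
  · simp [Ring.inverse_non_unit A hAu]

theorem IsPositive.inverse_add_rankOne {A : V →L[ℝ] V} (hA : A.IsPositive) (hAu : IsUnit A)
    (g : V) : IsUnit (A + rankOne g) ∧ (A + rankOne g)⁻¹ʳ = shermanMorrison A⁻¹ʳ g := by
  set P := A⁻¹ʳ
  have hP : P.IsPositive := hA.ringInverse
  have hAP (v : V) : A (P v) = v := DFunLike.congr_fun (Ring.mul_inverse_cancel A hAu) v
  have hPA (v : V) : P (A v) = v := DFunLike.congr_fun (Ring.inverse_mul_cancel A hAu) v
  have hPsymm (x y : V) : ⟪P x, y⟫ = ⟪x, P y⟫ := hP.isSymmetric x y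
  have hs : 1 + ⟪g, P g⟫ ≠ 0 := by linarith [hP.inner_nonneg_right g]
  let u : (V →L[ℝ] V)ˣ :=
    { val := A + rankOne g
      inv := shermanMorrison P g
      val_inv := by
        ext v
        simp only [shermanMorrison, mul_apply_eq_comp, add_apply, sub_apply, smul_apply,
          rankOne_apply, map_sub, map_smul, hAP, one_apply_eq_self]
        rw [hPsymm g v]
        match_scalars <;> field_simp
        ring
      inv_val := by
        ext v
        simp only [shermanMorrison, mul_apply_eq_comp, add_apply, sub_apply, smul_apply,
          rankOne_apply, map_add, map_smul, hPA, one_apply_eq_self]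
        rw [hPsymm g (A v), hPA, real_inner_comm g (P g)]
        match_scalars <;> field_simp
        ring }
  exact ⟨u.isUnit, Ring.inverse_unit u⟩

end ContinuousLinearMap

lemma inner_shermanMorrison_add_le {P : V →L[ℝ] V} (hP : P.IsPositive) {z g : V}
    (ha : ⟪z, P g⟫ ≤ 0) :
    ⟪z + g, shermanMorrison P g (z + g)⟫ ≤ ⟪z, P z⟫ + Real.log (1 + ⟪g, P g⟫) := by
  have hexpand : ⟪z + g, shermanMorrison P g (z + g)⟫ = ⟪z, P z⟫ +
      (2 * ⟪z, P g⟫ + ⟪g, P g⟫ - (⟪z, P g⟫ + ⟪g, P g⟫) ^ 2 / (1 + ⟪g, P g⟫)) := by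
    have hPsymm : ⟪g, P z⟫ = ⟪z, P g⟫ := by
      rw [← hP.isSymmetric.apply_clm, real_inner_comm]
    simp only [shermanMorrison, sub_apply, smul_apply, rankOne_apply, map_add, inner_add_left,
      inner_add_right, inner_sub_right, inner_smul_right, hPsymm, real_inner_comm _ (P g)]
    ring
  rw [hexpand]
  linarith [two_mul_add_sub_sq_div_le_log ha (hP.inner_nonneg_right g)]

/-- `A_n = λ I + Σ_{i<n} G i ⊗ G i`; the sequence `G` is indexed from `0`, so `G i = g_{i+1}`. -/
noncomputable def covOp (lam : ℝ) (G : ℕ → V) (n : ℕ) : V →L[ℝ] V :=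
  lam • 1 + ∑ i ∈ range n, rankOne (G i)

section covOp

variable {lam : ℝ} (G : ℕ → V)

lemma covOp_succ (n : ℕ) : covOp lam G (n + 1) = covOp lam G n + rankOne (G n) := by
  rw [covOp, covOp, sum_range_succ, add_assoc]

lemma covOp_apply (n : ℕ) (v : V) :
    covOp lam G n v = lam • v + ∑ i ∈ range n, ⟪G i, v⟫ • G i := by
  simp [covOp, rankOne_apply]

lemma inner_covOp_self (n : ℕ) (v : V) :
    ⟪v, covOp lam G n v⟫ = lam * ‖v‖ ^ 2 + ∑ i ∈ range n, ⟪G i, v⟫ ^ 2 := by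
  simp [covOp_apply, inner_add_right, inner_sum, inner_smul_right, real_inner_comm v, sq]

lemma isPositive_covOp (hlam : 0 ≤ lam) (n : ℕ) : (covOp lam G n).IsPositive :=
  (ContinuousLinearMap.isPositive_one.smul_of_nonneg hlam).add <|
    ContinuousLinearMap.isPositive_sum _ fun i _ => isPositive_rankOne (G i)

lemma isUnit_covOp (hlam : 0 < lam) (n : ℕ) : IsUnit (covOp lam G n) := by
  induction n with
  | zero =>
    rw [covOp, range_zero, sum_empty, add_zero, ← Algebra.algebraMap_eq_smul_one]
    exact (isUnit_iff_ne_zero.2 hlam.ne').map _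
  | succ n ih =>
    rw [covOp_succ]
    exact ((isPositive_covOp G hlam.le n).inverse_add_rankOne ih (G n)).1

lemma inverse_covOp_succ (hlam : 0 < lam) (n : ℕ) :
    (covOp lam G (n + 1))⁻¹ʳ = shermanMorrison (covOp lam G n)⁻¹ʳ (G n) := by
  rw [covOp_succ]
  exact ((isPositive_covOp G hlam.le n).inverse_add_rankOne (isUnit_covOp G hlam n) (G n)).2

lemma inner_sum_inverse_covOp_sum_le (hlam : 0 < lam) (N : ℕ)
    (hopt : ∀ n < N, ⟪∑ i ∈ range n, G i, (covOp lam G n)⁻¹ʳ (G n)⟫ ≤ 0) :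
    ⟪∑ i ∈ range N, G i, (covOp lam G N)⁻¹ʳ (∑ i ∈ range N, G i)⟫ ≤
      ∑ n ∈ range N, Real.log (1 + ⟪G n, (covOp lam G n)⁻¹ʳ (G n)⟫) := by
  induction N with
  | zero => simp
  | succ N ih =>
    rw [sum_range_succ, sum_range_succ, inverse_covOp_succ G hlam]
    grw [inner_shermanMorrison_add_le (isPositive_covOp G hlam.le N).ringInverse
      (hopt N N.lt_add_one), ih fun n hn => hopt n (hn.trans N.lt_add_one)]

/-- The kernel trick: `A_n⁻¹ v` is computed by solving a linear system with the Gram matrix. -/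
lemma covOp_smul_sub_sum (hlam : lam ≠ 0) {n : ℕ} (v : V) (c : Fin n → ℝ)
    (hc : (1 + lam⁻¹ • Matrix.gram ℝ fun i : Fin n => G i) *ᵥ c =
      fun i : Fin n => lam⁻¹ * ⟪G i, v⟫) :
    covOp lam G n (lam⁻¹ • (v - ∑ k : Fin n, c k • G k)) = v := by
  rw [Matrix.add_mulVec, Matrix.one_mulVec, Matrix.smul_mulVec] at hc
  have hinner (i : Fin n) : ⟪G i, lam⁻¹ • (v - ∑ k : Fin n, c k • G k)⟫ = c i := by
    have hci : c i + lam⁻¹ * ∑ k : Fin n, c k * ⟪G i, G k⟫ = lam⁻¹ * ⟪G i, v⟫ := by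
      simpa [Matrix.mulVec, dotProduct, mul_comm] using congr_fun hc i
    simp only [inner_smul_right, inner_sub_right, inner_sum]
    linear_combination -hci
  rw [covOp_apply, smul_smul, mul_inv_cancel₀ hlam, one_smul,
    ← Fin.sum_univ_eq_sum_range (fun i => ⟪G i, _⟫ • G i)]
  simp only [hinner, sub_add_cancel]

lemma isUnit_det_one_add_smul_gram (hlam : 0 < lam) (n : ℕ) :
    IsUnit (1 + lam⁻¹ • Matrix.gram ℝ fun i : Fin n => G i).det :=
  (Matrix.PosDef.one.add_posSemidef
    ((Matrix.posSemidef_gram ℝ _).smul (inv_nonneg.2 hlam.le))).det_pos.ne'.isUnit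

lemma inner_inverse_covOp_self (hlam : 0 < lam) (n : ℕ) (v : V) :
    ⟪v, (covOp lam G n)⁻¹ʳ v⟫ = lam⁻¹ * ⟪v, v⟫ - (fun j : Fin n => lam⁻¹ * ⟪v, G j⟫) ⬝ᵥ
      (1 + lam⁻¹ • Matrix.gram ℝ fun i : Fin n => G i)⁻¹ *ᵥ
        fun i : Fin n => lam⁻¹ * ⟪G i, v⟫ := by
  set M := 1 + lam⁻¹ • Matrix.gram ℝ fun i : Fin n => G i
  set c := M⁻¹ *ᵥ fun i : Fin n => lam⁻¹ * ⟪G i, v⟫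
  have hc : M *ᵥ c = fun i : Fin n => lam⁻¹ * ⟪G i, v⟫ := by
    rw [Matrix.mulVec_mulVec, Matrix.mul_nonsing_inv _ (isUnit_det_one_add_smul_gram G hlam n),
      Matrix.one_mulVec]
  have hPv : (covOp lam G n)⁻¹ʳ v = lam⁻¹ • (v - ∑ k : Fin n, c k • G k) := by
    conv_lhs => rw [← covOp_smul_sub_sum G hlam.ne' v c hc]
    exact DFunLike.congr_fun (Ring.inverse_mul_cancel _ (isUnit_covOp G hlam n)) _
  rw [hPv, inner_smul_right, inner_sub_right, inner_sum, dotProduct, mul_sub, Finset.mul_sum]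
  simp only [inner_smul_right]
  congr 1
  exact Finset.sum_congr rfl fun k _ => by ring

lemma det_one_add_smul_gram (hlam : 0 < lam) (n : ℕ) :
    (1 + lam⁻¹ • Matrix.gram ℝ fun i : Fin n => G i).det =
      ∏ i ∈ range n, (1 + ⟪G i, (covOp lam G i)⁻¹ʳ (G i)⟫) := by
  induction n with
  | zero => simp
  | succ n ih =>
    have hsub : (1 + lam⁻¹ • Matrix.gram ℝ fun i : Fin (n + 1) => G i).submatrix
        Fin.castSucc Fin.castSucc = 1 + lam⁻¹ • Matrix.gram ℝ fun i : Fin n => G i := by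
      ext i j
      simp [Matrix.one_apply]
    rw [Matrix.det_succ_eq_det_mul_sub_dotProduct _ (hsub ▸ isUnit_det_one_add_smul_gram G hlam n),
      hsub, ih, prod_range_succ, inner_inverse_covOp_self G hlam]
    congr 1
    simp only [Matrix.add_apply, Matrix.one_apply_eq, Matrix.one_apply_ne, Matrix.smul_apply,
      Matrix.gram_apply, Fin.val_last, Fin.val_castSucc, Fin.castSucc_ne_last,
      (Fin.castSucc_ne_last _).symm, smul_eq_mul, zero_add, ne_eq, not_false_eq_true]
    ring

theorem neg_inner_sum_le_of_inner_inverse_covOp_nonpos {B : ℝ} (hlam : 0 < lam) (hB : 0 ≤ B)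
    (u : V) {N : ℕ} (δ : Fin N → ℝ)
    (hopt : ∀ t : Fin N, ⟪∑ i ∈ range t, G i, (covOp lam G t)⁻¹ʳ (G t)⟫ ≤ 0)
    (hbound : ∀ t : Fin N, |⟪u, G t⟫| ≤ B) (hδ : ∀ t : Fin N, ⟪u, G t⟫ ≤ δ t)
    (hδ0 : ∀ t, 0 ≤ δ t) :
    -⟪u, ∑ n ∈ range N, G n⟫ ≤
      B * Real.log (1 + lam⁻¹ • Matrix.gram ℝ fun t : Fin N => G t).det +
        ‖u‖ * √(lam * Real.log (1 + lam⁻¹ • Matrix.gram ℝ fun t : Fin N => G t).det) +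
        √(2 * B * (∑ t, δ t) * Real.log (1 + lam⁻¹ • Matrix.gram ℝ fun t : Fin N => G t).det) := by
  set z := ∑ n ∈ range N, G n
  set H := Real.log (1 + lam⁻¹ • Matrix.gram ℝ fun t : Fin N => G t).det with hHdef
  have hA := isPositive_covOp G hlam.le N
  have hs (n : ℕ) : 0 ≤ ⟪G n, (covOp lam G n)⁻¹ʳ (G n)⟫ :=
    (isPositive_covOp G hlam.le n).ringInverse.inner_nonneg_right (G n)
  have hH : H = ∑ n ∈ range N, Real.log (1 + ⟪G n, (covOp lam G n)⁻¹ʳ (G n)⟫) := by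
    rw [hHdef, det_one_add_smul_gram G hlam, Real.log_prod fun n _ => by linarith [hs n]]
  have hH0 : 0 ≤ H := hH ▸ sum_nonneg fun n _ => Real.log_nonneg (by linarith [hs n])
  have hpot : ⟪z, (covOp lam G N)⁻¹ʳ z⟫ ≤ H :=
    hH ▸ inner_sum_inverse_covOp_sum_le G hlam N fun n hn => hopt ⟨n, hn⟩
  have hcs : ⟪u, z⟫ ^ 2 ≤ ⟪u, covOp lam G N u⟫ * ⟪z, (covOp lam G N)⁻¹ʳ z⟫ := by
    have hAP : covOp lam G N ((covOp lam G N)⁻¹ʳ z) = z :=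
      DFunLike.congr_fun (Ring.mul_inverse_cancel _ (isUnit_covOp G hlam N)) z
    simpa only [hAP, real_inner_comm z] using hA.inner_apply_sq_le u ((covOp lam G N)⁻¹ʳ z)
  have hquad : ⟪u, covOp lam G N u⟫ ≤ lam * ‖u‖ ^ 2 + B * (2 * ∑ t, δ t - ⟪u, z⟫) := by
    rw [inner_covOp_self, inner_sum, ← Fin.sum_univ_eq_sum_range (fun i => ⟪G i, u⟫ ^ 2),
      ← Fin.sum_univ_eq_sum_range (fun i => ⟪u, G i⟫), mul_sum, ← sum_sub_distrib, mul_sum]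
    gcongr with t
    rw [real_inner_comm]
    exact sq_le_mul_two_mul_sub (hbound t) (hδ t) (hδ0 t)
  have hΔ : 0 ≤ ∑ t, δ t := sum_nonneg fun t _ => hδ0 t
  have key : ⟪u, z⟫ ^ 2 ≤ (lam * ‖u‖ ^ 2 + B * (2 * ∑ t, δ t - ⟪u, z⟫)) * H :=
    hcs.trans (mul_le_mul hquad hpot (hA.ringInverse.inner_nonneg_right z)
      ((hA.inner_nonneg_right u).trans hquad))
  refine le_add_add_of_sq_le (mul_nonneg hB hH0) (by positivity) (Real.sqrt_nonneg _) ?_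
  rw [mul_pow, Real.sq_sqrt (by positivity), Real.sq_sqrt (by positivity)]
  linear_combination key

end covOp

end

theorem corectron_suboptimality_robust_bound_general
    {V : Type*} [NormedAddCommGroup V] [InnerProductSpace ℝ V]
    (T : ℕ) (lam B : ℝ) (hlam : 0 < lam) (hB : 0 < B)
    (X : Fin T → Set V)
    (xhat xobs g : Fin T → V)
    (A : ℕ → (V →L[ℝ] V)) (ζ : ℕ → V) (what : Fin T → V)
    (hA0 : A 0 = lam • (1 : V →L[ℝ] V)) (hζ0 : ζ 0 = 0)
    (hwhat : ∀ t : Fin T, what t = -(Ring.inverse (A t)) (ζ t))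
    (hxhat_mem : ∀ t, xhat t ∈ X t)
    (hxhat_opt : ∀ t : Fin T, ∀ y ∈ X t, ⟪what t, y⟫ ≤ ⟪what t, xhat t⟫)
    (hxobs_mem : ∀ t, xobs t ∈ X t)
    (hg : ∀ t, g t = xhat t - xobs t)
    (hA : ∀ t : Fin T, A ((t : ℕ) + 1) = A t + rankOne (g t))
    (hζ : ∀ t : Fin T, ζ ((t : ℕ) + 1) = ζ t + g t)
    (u : V)
    (hbound : ∀ t : Fin T, ∀ x ∈ X t, ∀ x' ∈ X t, ⟪u, x - x'⟫ ≤ B)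
    (δ : Fin T → ℝ) (hδ0 : ∀ t, 0 ≤ δ t)
    (hδ : ∀ t, ⟪u, xhat t - xobs t⟫ ≤ δ t)
    (K : Matrix (Fin T) (Fin T) ℝ)
    (hK : ∀ i j, K i j = ⟪g i, g j⟫) :
    (∑ t, ⟪u, xobs t - xhat t⟫) ≤
      B * Real.log (1 + lam⁻¹ • K).det +
        ‖u‖ * Real.sqrt (lam * Real.log (1 + lam⁻¹ • K).det) +
        Real.sqrt (2 * B * (∑ t, δ t) * Real.log (1 + lam⁻¹ • K).det) := by
  set G : ℕ → V := fun n => if h : n < T then g ⟨n, h⟩ else 0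
  have hG (t : Fin T) : G t = g t := dif_pos t.isLt
  have hAG (t : Fin T) : A t = covOp lam G t := by
    rw [eq_add_sum_range_of_succ_eq_add (s := A) (f := fun n => rankOne (G n))
      (fun n hn => by rw [hA ⟨n, hn⟩, ← hG]) t.isLt.le, hA0]
    rfl
  have hζG (t : Fin T) : ζ t = ∑ i ∈ range t, G i := by
    rw [eq_add_sum_range_of_succ_eq_add (s := ζ) (f := G)
      (fun n hn => by rw [hζ ⟨n, hn⟩, ← hG]) t.isLt.le, hζ0, zero_add]
  have hopt (t : Fin T) : ⟪∑ i ∈ range t, G i, (covOp lam G t)⁻¹ʳ (G t)⟫ ≤ 0 := by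
    have h := hxhat_opt t _ (hxobs_mem t)
    rwa [hwhat, hAG, hζG, ← sub_nonneg, ← inner_sub_right, ← hg, ← hG, inner_neg_left, neg_nonneg,
      (isPositive_covOp G hlam.le t).ringInverse.isSymmetric.apply_clm] at h
  have hK' : K = Matrix.gram ℝ fun t : Fin T => G t :=
    Matrix.ext fun i j => by rw [hK, Matrix.gram_apply, hG, hG]
  have hregret : ∑ t, ⟪u, xobs t - xhat t⟫ = -⟪u, ∑ n ∈ range T, G n⟫ := by
    rw [← Fin.sum_univ_eq_sum_range, inner_sum, ← sum_neg_distrib]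
    exact sum_congr rfl fun t _ => by rw [hG, hg, ← inner_neg_right, neg_sub]
  rw [hregret, hK']
  refine neg_inner_sum_le_of_inner_inverse_covOp_nonpos G hlam hB.le u δ hopt (fun t => ?_)
    (fun t => hG t ▸ hg t ▸ hδ t) hδ0
  rw [hG, hg, abs_le, neg_le, ← inner_neg_right, neg_sub]
  exact ⟨hbound t _ (hxobs_mem t) _ (hxhat_mem t), hbound t _ (hxhat_mem t) _ (hxobs_mem t)⟩

/-- Suboptimality-robust regret bound for CoRectron: with possibly suboptimal feedback,
`R_T(u) ≤ B·H_T + ‖u‖·√(λ·H_T) + √(2B·Δ_T·H_T)` where `H_T = log det (I_T + λ⁻¹ K_T)`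
and `Δ_T = Σ_t δ_t` bounds the cumulative suboptimality. -/
theorem corectron_suboptimality_robust_bound
    {V : Type*} [NormedAddCommGroup V] [InnerProductSpace ℝ V] [CompleteSpace V]
    (T : ℕ) (lam B : ℝ) (hlam : 0 < lam) (hB : 0 < B)
    (X : Fin T → Set V) (hXne : ∀ t, (X t).Nonempty)
    (xhat xobs g : Fin T → V)
    (A : ℕ → (V →L[ℝ] V)) (ζ : ℕ → V) (what : Fin T → V)
    (hA0 : A 0 = lam • (1 : V →L[ℝ] V)) (hζ0 : ζ 0 = 0)
    (hwhat : ∀ t : Fin T, what t = -(Ring.inverse (A t)) (ζ t))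
    (hxhat_mem : ∀ t, xhat t ∈ X t)
    (hxhat_opt : ∀ t : Fin T, ∀ y ∈ X t, ⟪what t, y⟫ ≤ ⟪what t, xhat t⟫)
    (hxobs_mem : ∀ t, xobs t ∈ X t)
    (hg : ∀ t, g t = xhat t - xobs t)
    (hA : ∀ t : Fin T, A ((t : ℕ) + 1) = A t + rankOne (g t))
    (hζ : ∀ t : Fin T, ζ ((t : ℕ) + 1) = ζ t + g t)
    (u : V)
    (hbound : ∀ t : Fin T, ∀ x ∈ X t, ∀ x' ∈ X t, ⟪u, x - x'⟫ ≤ B)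
    (δ : Fin T → ℝ) (hδ0 : ∀ t, 0 ≤ δ t)
    (hδ : ∀ t, ⟪u, xhat t - xobs t⟫ ≤ δ t)
    (K : Matrix (Fin T) (Fin T) ℝ)
    (hK : ∀ i j, K i j = ⟪g i, g j⟫) :
    (∑ t, ⟪u, xobs t - xhat t⟫) ≤
      B * Real.log (1 + lam⁻¹ • K).det +
        ‖u‖ * Real.sqrt (lam * Real.log (1 + lam⁻¹ • K).det) +
        Real.sqrt (2 * B * (∑ t, δ t) * Real.log (1 + lam⁻¹ • K).det) :=
  corectron_suboptimality_robust_bound_general T lam B hlam hB X xhat xobs g A ζ what hA0 hζ0 hwhat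
    hxhat_mem hxhat_opt hxobs_mem hg hA hζ u hbound δ hδ0 hδ K hK
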